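/- A finite graph G is chordal if and only if it admits a perfect elimination ordering, i.e., an enumeration v_1, ..., v_n of its vertices such that for each i, the vertex v_i is simplicial in the induced subgraph G[{v_i, v_{i+1}, ..., v_n}]. -/

import Mathlib

open SimpleGraph

/-- `f : ZMod n → V` traces an induced cycle of length `n` in `G`:
`f` is injective and adjacency holds exactly between consecutive vertices. -/
def IsInducedCycle {V : Type*} (G : SimpleGraph V) (n : ℕ) (f : ZMod n → V) : Prop :=
  Function.Injective f ∧ ∀ i j : ZMod n, G.Adj (f i) (f j) ↔ (j = i + 1 ∨ i = j + 1)

/-- A graph is chordal if it has no induced cycle of length at least 4. -/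
def Chordal {V : Type*} (G : SimpleGraph V) : Prop :=
  ∀ n, 4 ≤ n → ∀ f : ZMod n → V, ¬ IsInducedCycle G n f

/-- `G'` is a chordal completion of `G`. -/
def ChordalCompletion {V : Type*} (G G' : SimpleGraph V) : Prop :=
  Chordal G' ∧ G ≤ G'

/-- Minimal chordal completion: no proper spanning subgraph containing `G` is chordal. -/
def MinimalChordalCompletion {V : Type*} (G G' : SimpleGraph V) : Prop :=
  ChordalCompletion G G' ∧ ∀ H, ChordalCompletion G H → H ≤ G' → H = G'

/-!
If `σ` is a perfect elimination ordering, the `σ`-first vertex of an induced cycle has two later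
neighbours on the cycle, which must then be adjacent; in a cycle of length at least four they are
not.

Conversely, Dirac's lemma says that a chordal graph is complete or has two non-adjacent
simplicial vertices, and removing simplicial vertices one at a time gives the ordering. For
Dirac's lemma, take non-adjacent `a`, `b` and a minimal `a`–`b` separator `S`. Every vertex of `S`
has neighbours in the components `C_a` and `C_b`, so two non-adjacent vertices of `S` would be
joined by shortest paths through `C_a` and through `C_b`, which together form an induced cycle;
hence `S` is a clique. By induction `G[S ∪ C_a]` has a simplicial vertex outside the clique `S`,
and it stays simplicial in `G` because its neighbourhood lies in `S ∪ C_a`.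
-/

namespace SimpleGraph

variable {V : Type*} {G : SimpleGraph V}

theorem spanningCoe_induce_adj {B : Set V} {u v : V} :
    (G.induce B).spanningCoe.Adj u v ↔ u ∈ B ∧ v ∈ B ∧ G.Adj u v := by
  simp only [map_adj, comap_adj, Function.Embedding.subtype_apply, Subtype.exists,
    exists_and_left, exists_prop, ↓existsAndEq, and_true, true_and]
  tauto

theorem spanningCoe_induce_mono {B B' : Set V} (h : B ⊆ B') :
    (G.induce B).spanningCoe ≤ (G.induce B').spanningCoe := fun _ _ huv => by
  rw [spanningCoe_induce_adj] at huv ⊢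
  exact ⟨h huv.1, h huv.2.1, huv.2.2⟩

theorem Reachable.mem_of_adj_mem {C : Set V} {a b : V} (hab : G.Reachable a b) (ha : a ∈ C)
    (hC : ∀ ⦃u v⦄, u ∈ C → G.Adj u v → v ∈ C) : b ∈ C := by
  rw [reachable_iff_reflTransGen] at hab
  induction hab with
  | refl => exact ha
  | tail _ huv ih => exact hC ih huv

theorem Reachable.mem_of_spanningCoe_induce {B : Set V} {a b : V}
    (hab : (G.induce B).spanningCoe.Reachable a b) (ha : a ∈ B) : b ∈ B :=
  hab.mem_of_adj_mem ha fun _ _ _ huv => (spanningCoe_induce_adj.1 huv).2.1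

theorem Reachable.spanningCoe_induce_reachableSet {B : Set V} {a u : V}
    (hau : (G.induce B).spanningCoe.Reachable a u) :
    (G.induce {v | (G.induce B).spanningCoe.Reachable a v}).spanningCoe.Reachable a u := by
  set C := {v | (G.induce B).spanningCoe.Reachable a v}
  refine hau.mem_of_adj_mem (C := {v | (G.induce C).spanningCoe.Reachable a v}) Reachable.rfl
    fun v w hav hvw => hav.trans (Adj.reachable (spanningCoe_induce_adj.2 ?_))
  have hvC : v ∈ C := hav.mem_of_spanningCoe_induce (Reachable.refl a)
  exact ⟨hvC, Reachable.trans hvC hvw.reachable, (spanningCoe_induce_adj.1 hvw).2.2⟩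

theorem Walk.dist_getVert_getVert {u v : V} {p : G.Walk u v} (hp : p.length = G.dist u v)
    {i j : ℕ} (hij : i ≤ j) (hj : j ≤ p.length) :
    G.dist (p.getVert i) (p.getVert j) = j - i := by
  have hsub : ((p.drop i).take (j - i)).IsSubwalk p :=
    ((p.drop i).isSubwalk_take _).trans (p.isSubwalk_drop i)
  have := length_eq_dist_of_subwalk hp hsub
  simp only [Walk.take_length, Walk.drop_length, Walk.drop_getVert] at this
  rwa [Nat.add_sub_cancel' hij, min_eq_left (by omega), eq_comm] at this

end SimpleGraph

theorem ZMod.eq_add_one_iff_val {n : ℕ} [NeZero n] [Fact (1 < n)] (a b : ZMod n) :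
    a = b + 1 ↔ a.val = if b.val + 1 = n then 0 else b.val + 1 := by
  rw [← (ZMod.val_injective n).eq_iff, ZMod.val_add, ZMod.val_one]
  have := ZMod.val_lt b
  split_ifs with h
  · rw [h, Nat.mod_self]
  · rw [Nat.mod_eq_of_lt (by omega)]

section InducedPaths

variable {V : Type*} {G : SimpleGraph V}

def IsInducedPath (G : SimpleGraph V) (c : ℕ → V) (k : ℕ) : Prop :=
  ∀ ⦃i j⦄, i < j → j ≤ k → c i ≠ c j ∧ (G.Adj (c i) (c j) ↔ j = i + 1)

theorem isInducedCycle_of_nat {c : ℕ → V} {n : ℕ} (hn : 2 ≤ n)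
    (hc : ∀ ⦃s t⦄, s < t → t < n →
      c s ≠ c t ∧ (G.Adj (c s) (c t) ↔ t = s + 1 ∨ (s = 0 ∧ t + 1 = n))) :
    IsInducedCycle G n (fun i => c i.val) := by
  have : NeZero n := ⟨by omega⟩
  have : Fact (1 < n) := ⟨by omega⟩
  refine ⟨fun i j hij => ZMod.val_injective n ?_, fun i j => ?_⟩
  · by_contra hne
    rcases Nat.lt_or_gt_of_ne hne with h | h
    · exact (hc h (ZMod.val_lt j)).1 hij
    · exact (hc h (ZMod.val_lt i)).1 hij.symm
  · have hi := ZMod.val_lt i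
    have hj := ZMod.val_lt j
    simp only [ZMod.eq_add_one_iff_val i, ZMod.eq_add_one_iff_val j]
    rcases lt_trichotomy i.val j.val with h | h | h
    · rw [(hc h hj).2]
      split_ifs <;> omega
    · rw [ZMod.val_injective n h]
      simp only [G.irrefl, false_iff]
      split_ifs <;> omega
    · rw [G.adj_comm, (hc h hi).2]
      split_ifs <;> omega

theorem IsInducedPath.exists_isInducedCycle_glue {c d : ℕ → V} {k m : ℕ}
    (hc : IsInducedPath G c k) (hd : IsInducedPath G d m) (hk : 2 ≤ k) (hm : 2 ≤ m)
    (hx : c 0 = d m) (hy : c k = d 0)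
    (hcd : ∀ ⦃i j⦄, 0 < i → i < k → 0 < j → j < m → c i ≠ d j ∧ ¬ G.Adj (c i) (d j)) :
    ∃ f, IsInducedCycle G (k + m) f := by
  set cyc : ℕ → V := fun t => if t ≤ k then c t else d (t - k)
  have cyc_le {t} (ht : t ≤ k) : cyc t = c t := if_pos ht
  have cyc_ge {t} (ht : k ≤ t) : cyc t = d (t - k) := by
    rcases ht.eq_or_lt with rfl | ht
    · rw [cyc_le le_rfl, hy, Nat.sub_self]
    · exact if_neg (by omega)
  refine ⟨_, isInducedCycle_of_nat (c := cyc) (by omega) fun s t hst ht => ?_⟩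
  by_cases htk : t ≤ k
  · rw [cyc_le (hst.le.trans htk), cyc_le htk, (hc hst htk).2]
    exact ⟨(hc hst htk).1, by omega⟩
  by_cases hks : k ≤ s
  · rw [cyc_ge hks, cyc_ge (hks.trans hst.le), (hd (by omega : s - k < t - k) (by omega)).2]
    exact ⟨(hd (by omega) (by omega)).1, by omega⟩
  rw [cyc_le (by omega), cyc_ge (by omega)]
  rcases Nat.eq_zero_or_pos s with rfl | hs
  · rw [hx, ne_comm, G.adj_comm, (hd (by omega : t - k < m) le_rfl).2]
    exact ⟨(hd (by omega) le_rfl).1, by omega⟩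
  · obtain ⟨hne, hnadj⟩ := hcd hs (by omega) (by omega : 0 < t - k) (by omega)
    exact ⟨hne, by simp only [hnadj, false_iff]; omega⟩

end InducedPaths

section Separators

variable {V : Type*} {G : SimpleGraph V}

/-- A geodesic of `G[B]` is an induced path of `G`. -/
theorem SimpleGraph.Reachable.exists_isInducedPath {B : Set V} {x y : V} (hx : x ∈ B)
    (h : (G.induce B).spanningCoe.Reachable x y) :
    ∃ k c, c 0 = x ∧ c k = y ∧ (∀ i ≤ k, c i ∈ B) ∧ IsInducedPath G c k := by
  obtain ⟨p, hp⟩ := h.exists_walk_length_eq_dist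
  have hB : ∀ i ≤ p.length, p.getVert i ∈ B := by
    rintro (_ | i) hi
    · simpa using hx
    · exact (spanningCoe_induce_adj.1 (p.adj_getVert_succ hi)).2.1
  refine ⟨p.length, p.getVert, p.getVert_zero, p.getVert_length, hB, fun i j hij hj => ?_⟩
  have hdist := p.dist_getVert_getVert hp hij.le hj
  refine ⟨fun h => by rw [h, dist_self] at hdist; omega, ?_⟩
  have hadj : (G.induce B).spanningCoe.Adj (p.getVert i) (p.getVert j) ↔
      G.Adj (p.getVert i) (p.getVert j) := by
    simp only [spanningCoe_induce_adj, hB i (by omega), hB j hj, true_and]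
  rw [← hadj, ← dist_eq_one_iff_adj, hdist]
  omega

theorem exists_isInducedPath_of_adj_reachable {W : Set V} {a x y : V} (hxy : x ≠ y)
    (hnadj : ¬ G.Adj x y)
    (hx : ∃ u, (G.induce W).spanningCoe.Reachable a u ∧ G.Adj u x)
    (hy : ∃ u, (G.induce W).spanningCoe.Reachable a u ∧ G.Adj u y) :
    ∃ k c, 2 ≤ k ∧ c 0 = x ∧ c k = y ∧ IsInducedPath G c k ∧
      ∀ i, 0 < i → i < k → (G.induce W).spanningCoe.Reachable a (c i) := by
  obtain ⟨u, hau, hux⟩ := hx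
  obtain ⟨w, haw, hwy⟩ := hy
  set C := {v | (G.induce W).spanningCoe.Reachable a v}
  have hCB : C ⊆ insert x (insert y C) := fun v hv => Or.inr (Or.inr hv)
  have hxy' : (G.induce (insert x (insert y C))).spanningCoe.Reachable x y := by
    have huw : (G.induce C).spanningCoe.Reachable u w :=
      hau.spanningCoe_induce_reachableSet.symm.trans haw.spanningCoe_induce_reachableSet
    refine (Adj.reachable ?_).trans ((huw.mono (spanningCoe_induce_mono hCB)).trans
      (Adj.reachable ?_))
    · exact spanningCoe_induce_adj.2 ⟨Or.inl rfl, hCB hau, hux.symm⟩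
    · exact spanningCoe_induce_adj.2 ⟨hCB haw, Or.inr (Or.inl rfl), hwy⟩
  obtain ⟨k, c, hc0, hck, hcB, hc⟩ := hxy'.exists_isInducedPath (Set.mem_insert x _)
  refine ⟨k, c, ?_, hc0, hck, hc, fun i hi hik => ?_⟩
  · by_contra! hk
    interval_cases k
    · exact hxy (hc0.symm.trans hck)
    · exact hnadj (hc0 ▸ hck ▸ (hc zero_lt_one le_rfl).2.2 rfl)
  · rcases hcB i hik.le with hcx | hcy | hcC
    · exact absurd (hcx.trans hc0.symm) (hc hi hik.le).1.symm
    · exact absurd (hcy.trans hck.symm) (hc hik le_rfl).1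
    · exact hcC

/-- Two induced paths between non-adjacent `x y ∈ S`, one through the class of `a` and one through
that of `b`, would glue to an induced cycle. -/
theorem Chordal.isClique_of_separates (hG : Chordal G) {W S : Set V} {a b : V} (ha : a ∈ W)
    (hb : b ∈ W) (hab : ¬ (G.induce W).spanningCoe.Reachable a b)
    (hSa : ∀ s ∈ S, ∃ u, (G.induce W).spanningCoe.Reachable a u ∧ G.Adj u s)
    (hSb : ∀ s ∈ S, ∃ u, (G.induce W).spanningCoe.Reachable b u ∧ G.Adj u s) :
    G.IsClique S := by
  intro x hx y hy hxy
  by_contra hnadj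
  obtain ⟨k, c, hk, hc0, hck, hc, hcW⟩ :=
    exists_isInducedPath_of_adj_reachable hxy hnadj (hSa x hx) (hSa y hy)
  obtain ⟨m, d, hm, hd0, hdm, hd, hdW⟩ :=
    exists_isInducedPath_of_adj_reachable hxy.symm (fun h => hnadj h.symm) (hSb y hy) (hSb x hx)
  have hcross : ∀ ⦃i j⦄, 0 < i → i < k → 0 < j → j < m → c i ≠ d j ∧ ¬ G.Adj (c i) (d j) := by
    intro i j hi hik hj hjm
    have hai := hcW i hi hik
    have hbj := hdW j hj hjm
    refine ⟨fun h => hab (hai.trans (h ▸ hbj.symm)), fun h => hab (hai.trans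
      ((Adj.reachable (spanningCoe_induce_adj.2 ⟨?_, ?_, h⟩)).trans hbj.symm))⟩
    · exact hai.mem_of_spanningCoe_induce ha
    · exact hbj.mem_of_spanningCoe_induce hb
  obtain ⟨f, hf⟩ :=
    hc.exists_isInducedCycle_glue hd hk hm (hc0.trans hdm.symm) (hck.trans hd0.symm) hcross
  exact hG _ (by omega) f hf

end Separators

section Dirac

variable {V : Type*} {G : SimpleGraph V}

/-- `v` is simplicial in `G[A]`; `v ∈ A` is not required. -/
def IsSimplicialIn (G : SimpleGraph V) (A : Set V) (v : V) : Prop :=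
  G.IsClique (G.neighborSet v ∩ A)

theorem exists_adj_of_reachable_insert {W : Set V} {a b s : V} (ha : a ∈ W)
    (hab : ¬ (G.induce W).spanningCoe.Reachable a b)
    (h : (G.induce (insert s W)).spanningCoe.Reachable a b) :
    ∃ u, (G.induce W).spanningCoe.Reachable a u ∧ G.Adj u s := by
  by_contra! hs
  refine hab (h.mem_of_adj_mem (C := {v | (G.induce W).spanningCoe.Reachable a v})
    Reachable.rfl fun u v hau huv => ?_)
  obtain ⟨-, rfl | hv, hGuv⟩ := spanningCoe_induce_adj.1 huv
  · exact absurd hGuv (hs u hau)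
  · exact hau.trans (Adj.reachable (spanningCoe_induce_adj.2
      ⟨hau.mem_of_spanningCoe_induce ha, hv, hGuv⟩))

theorem exists_minimal_separator {A : Finset V} {a b : V} (ha : a ∈ A) (hb : b ∈ A) (hab : a ≠ b)
    (hnadj : ¬ G.Adj a b) :
    ∃ S ⊆ A, a ∉ S ∧ b ∉ S ∧ ¬ (G.induce (↑A \ ↑S)).spanningCoe.Reachable a b ∧
      ∀ s ∈ S, (G.induce (insert s (↑A \ ↑S))).spanningCoe.Reachable a b := by
  classical
  set seps := (A \ {a, b}).powerset.filter
    fun S : Finset V => ¬ (G.induce (↑A \ ↑S)).spanningCoe.Reachable a b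
  have hsep : A \ {a, b} ∈ seps := by
    refine Finset.mem_filter.2 ⟨Finset.mem_powerset_self _, fun h => hab (Eq.symm ?_)⟩
    refine h.mem_of_adj_mem (C := {a}) rfl fun u v hu huv => ?_
    obtain ⟨-, hv, hGuv⟩ := spanningCoe_induce_adj.1 huv
    rw [hu] at hGuv
    obtain rfl | rfl : v = a ∨ v = b := (by simpa using hv : v ∈ A ∧ (v = a ∨ v = b)).2
    · exact absurd hGuv G.irrefl
    · exact absurd hGuv hnadj
  obtain ⟨S, hS, hmin⟩ := Finset.exists_min_image seps Finset.card ⟨_, hsep⟩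
  obtain ⟨hSab, hSsep⟩ := Finset.mem_filter.1 hS
  have hSab := Finset.mem_powerset.1 hSab
  refine ⟨S, hSab.trans Finset.sdiff_subset, fun h => by simpa using hSab h,
    fun h => by simpa using hSab h, hSsep, fun s hs => ?_⟩
  have herase : (↑A \ ↑(S.erase s) : Set V) = insert s (↑A \ ↑S) := by
    ext v
    have := Finset.sdiff_subset (hSab hs)
    by_cases hv : v = s <;> simp [hv, this]
  by_contra h
  rw [← herase] at h
  have := hmin _ (Finset.mem_filter.2 ⟨Finset.mem_powerset.2
    ((Finset.erase_subset s S).trans hSab), h⟩)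
  rw [Finset.card_erase_of_mem hs] at this
  have := Finset.card_pos.2 ⟨s, hs⟩
  omega

theorem exists_isSimplicialIn_not_mem {B : Finset V} {S : Set V} {a : V}
    (hB : G.IsClique (B : Set V) ∨ ∃ u ∈ B, ∃ v ∈ B, u ≠ v ∧ ¬ G.Adj u v ∧
      IsSimplicialIn G B u ∧ IsSimplicialIn G B v)
    (hS : G.IsClique S) (ha : a ∈ B) (haS : a ∉ S) :
    ∃ u ∈ B, u ∉ S ∧ IsSimplicialIn G B u := by
  rcases hB with hB | ⟨u, hu, v, hv, huv, hnadj, hsu, hsv⟩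
  · exact ⟨a, ha, haS, hB.subset Set.inter_subset_right⟩
  · by_cases huS : u ∈ S
    · exact ⟨v, hv, fun hvS => hnadj (hS huS hvS huv), hsv⟩
    · exact ⟨u, hu, huS, hsu⟩

/-- Induction is applied to `S ∪ C`, with `C` the class of `a` in `G[A \ S]`: the neighbours in `A`
of a vertex of `C` all lie in `S ∪ C`. -/
theorem exists_isSimplicialIn_of_separates {A S : Finset V} {a b : V}
    (hS : G.IsClique (S : Set V)) (ha : a ∈ A) (haS : a ∉ S) (hb : b ∈ A) (hbS : b ∉ S)
    (hab : ¬ (G.induce (↑A \ ↑S)).spanningCoe.Reachable a b)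
    (ih : ∀ B ⊂ A, G.IsClique (B : Set V) ∨ ∃ u ∈ B, ∃ v ∈ B, u ≠ v ∧ ¬ G.Adj u v ∧
      IsSimplicialIn G B u ∧ IsSimplicialIn G B v) :
    ∃ u, (G.induce (↑A \ ↑S)).spanningCoe.Reachable a u ∧ IsSimplicialIn G A u := by
  classical
  set A₁ := A.filter fun v => v ∈ S ∨ (G.induce (↑A \ ↑S)).spanningCoe.Reachable a v
  have hA₁ : A₁ ⊂ A := Finset.filter_ssubset.2 ⟨b, hb, by simp [hbS, hab]⟩
  obtain ⟨u, hu, huS, hsimp⟩ := exists_isSimplicialIn_not_mem (ih A₁ hA₁) hS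
    (Finset.mem_filter.2 ⟨ha, Or.inr Reachable.rfl⟩) (Finset.mem_coe.not.2 haS)
  obtain ⟨huA, hau⟩ := Finset.mem_filter.1 hu
  have hau := hau.resolve_left huS
  refine ⟨u, hau, IsClique.subset ?_ hsimp⟩
  rintro v ⟨huv, hv⟩
  refine ⟨huv, Finset.mem_filter.2 ⟨hv, ?_⟩⟩
  by_cases hvS : v ∈ S
  · exact Or.inl hvS
  · exact Or.inr (hau.trans (Adj.reachable
      (spanningCoe_induce_adj.2 ⟨⟨huA, huS⟩, ⟨hv, hvS⟩, huv⟩)))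

theorem Chordal.isClique_or_exists_isSimplicialIn_pair (hG : Chordal G) (A : Finset V) :
    G.IsClique (A : Set V) ∨ ∃ u ∈ A, ∃ v ∈ A, u ≠ v ∧ ¬ G.Adj u v ∧
      IsSimplicialIn G A u ∧ IsSimplicialIn G A v := by
  induction A using Finset.strongInduction with
  | H A ih =>
  refine or_iff_not_imp_left.2 fun hA => ?_
  obtain ⟨a, ha, b, hb, hab, hnadj⟩ : ∃ a ∈ A, ∃ b ∈ A, a ≠ b ∧ ¬ G.Adj a b := by
    simpa [IsClique, Set.Pairwise] using hA
  obtain ⟨S, -, haS, hbS, hsep, hmin⟩ := exists_minimal_separator ha hb hab hnadj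
  have haW : a ∈ (↑A \ ↑S : Set V) := ⟨ha, haS⟩
  have hbW : b ∈ (↑A \ ↑S : Set V) := ⟨hb, hbS⟩
  have hS : G.IsClique (S : Set V) := hG.isClique_of_separates haW hbW hsep
    (fun s hs => exists_adj_of_reachable_insert haW hsep (hmin s hs))
    (fun s hs => exists_adj_of_reachable_insert hbW (fun h => hsep h.symm) (hmin s hs).symm)
  obtain ⟨u, hau, hu⟩ := exists_isSimplicialIn_of_separates hS ha haS hb hbS hsep ih
  obtain ⟨v, hbv, hv⟩ :=
    exists_isSimplicialIn_of_separates hS hb hbS ha haS (fun h => hsep h.symm) ih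
  have huW := hau.mem_of_spanningCoe_induce haW
  have hvW := hbv.mem_of_spanningCoe_induce hbW
  refine ⟨u, huW.1, v, hvW.1, fun h => hsep (hau.trans (h ▸ hbv.symm)),
    fun h => hsep (hau.trans ((Adj.reachable ?_).trans hbv.symm)), hu, hv⟩
  exact spanningCoe_induce_adj.2 ⟨huW, hvW, h⟩

theorem Chordal.exists_isSimplicialIn (hG : Chordal G) {A : Finset V} (hA : A.Nonempty) :
    ∃ v ∈ A, IsSimplicialIn G A v := by
  rcases hG.isClique_or_exists_isSimplicialIn_pair A with hA' | ⟨u, hu, -, -, -, -, hsu, -⟩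
  · obtain ⟨v, hv⟩ := hA
    exact ⟨v, hv, hA'.subset Set.inter_subset_right⟩
  · exact ⟨u, hu, hsu⟩

end Dirac

section EliminationOrder

variable {V : Type*} {G : SimpleGraph V}

theorem Chordal.exists_eliminationList [DecidableEq V] (hG : Chordal G) (A : Finset V) :
    ∃ l : List V, l.Nodup ∧ l.toFinset = A ∧
      ∀ i (hi : i < l.length), IsSimplicialIn G {x | x ∈ l.drop i} l[i] := by
  induction A using Finset.strongInduction with
  | H A ih =>
  rcases A.eq_empty_or_nonempty with rfl | hA
  · exact ⟨[], List.nodup_nil, rfl, fun i hi => absurd hi (Nat.not_lt_zero i)⟩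
  obtain ⟨v, hv, hsv⟩ := hG.exists_isSimplicialIn hA
  obtain ⟨l, hnd, hl, hsimp⟩ := ih (A.erase v) (Finset.erase_ssubset hv)
  have hvl : v ∉ l := by simp [← List.mem_toFinset, hl]
  have hvl' : (v :: l).toFinset = A := by rw [List.toFinset_cons, hl, Finset.insert_erase hv]
  refine ⟨v :: l, List.nodup_cons.2 ⟨hvl, hnd⟩, hvl', fun i hi => ?_⟩
  cases i with
  | zero => simpa [← List.mem_toFinset, hvl'] using hsv
  | succ i => exact hsimp i (Nat.lt_of_succ_lt_succ hi)

theorem chordal_of_injective_of_isSimplicialIn {α : Type*} [LinearOrder α] {σ : V → α}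
    (hσ : Function.Injective σ) (h : ∀ v, IsSimplicialIn G {w | σ v < σ w} v) : Chordal G := by
  rintro n hn f ⟨hf, hadj⟩
  have : NeZero n := ⟨by omega⟩
  have hne (k : ℕ) (hk0 : 0 < k) (hkn : k < n) : (k : ZMod n) ≠ 0 := fun hk =>
    absurd (Nat.le_of_dvd hk0 ((ZMod.natCast_eq_zero_iff k n).1 hk)) (by omega)
  obtain ⟨i, -, hi⟩ := Finset.univ.exists_min_image (σ ∘ f) Finset.univ_nonempty
  have hlater (j : ZMod n) (hj : j ≠ i) : σ (f i) < σ (f j) :=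
    (hi j (Finset.mem_univ j)).lt_of_ne (hσ.ne (hf.ne hj.symm))
  have h1 : (1 : ZMod n) ≠ 0 := by exact_mod_cast hne 1 one_pos (by omega)
  have h2 : (2 : ZMod n) ≠ 0 := by exact_mod_cast hne 2 two_pos (by omega)
  have h3 : (3 : ZMod n) ≠ 0 := by exact_mod_cast hne 3 three_pos (by omega)
  have hsucc : i + 1 ≠ i := fun h => h1 (by linear_combination h)
  have hpred : i - 1 ≠ i := fun h => h1 (by linear_combination -h)
  have hchord := h (f i) ⟨(hadj i (i + 1)).2 (Or.inl rfl), hlater _ hsucc⟩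
    ⟨(hadj i (i - 1)).2 (Or.inr (by ring)), hlater _ hpred⟩
    (hf.ne fun h => h2 (by linear_combination h))
  rcases (hadj _ _).1 hchord with h | h
  · exact h3 (by linear_combination -h)
  · exact h1 (by linear_combination h)

end EliminationOrder

theorem stmt_16 {V : Type*} [Fintype V] (G : SimpleGraph V) :
    Chordal G ↔
      ∃ e : Fin (Fintype.card V) ≃ V,
        ∀ i j k : Fin (Fintype.card V), i < j → i < k → j ≠ k →
          G.Adj (e i) (e j) → G.Adj (e i) (e k) → G.Adj (e j) (e k) := by
  classical
  refine ⟨fun hG => ?_, fun ⟨e, he⟩ => ?_⟩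
  · obtain ⟨l, hnd, hl, hsimp⟩ := hG.exists_eliminationList Finset.univ
    have hmem (x : V) : x ∈ l := by simp [← List.mem_toFinset, hl]
    have hlen : l.length = Fintype.card V := by
      rw [← List.toFinset_card_of_nodup hnd, hl, Finset.card_univ]
    refine ⟨(finCongr hlen.symm).trans (hnd.getEquivOfForallMemList l hmem),
      fun i j k hij hik hjk hj hk => ?_⟩
    have hlater {j : Fin (Fintype.card V)} (hij : i < j) : l[(j : ℕ)] ∈ l.drop i :=
      List.mem_drop_iff_getElem.2 ⟨j - i, by omega, by congr 1; omega⟩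
    exact hsimp i (by omega) ⟨hj, hlater hij⟩ ⟨hk, hlater hik⟩
      (hjk ∘ Fin.ext ∘ hnd.getElem_inj_iff.1)
  · refine chordal_of_injective_of_isSimplicialIn e.symm.injective
      fun v x ⟨hvx, hx⟩ y ⟨hvy, hy⟩ hxy => ?_
    simpa using he (e.symm v) (e.symm x) (e.symm y) hx hy (e.symm.injective.ne hxy)
      (by simpa using hvx) (by simpa using hvy)
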